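/- Let G' be obtained from a labeled graph G by the second graph-move Ω2, i.e. by adding two vertices that have the same adjacencies with all vertices of G, carry opposite signs, and are either non-adjacent with both framings 0 or adjacent with both framings 1. Then ⟨G'⟩ = ⟨G⟩. -/

import Mathlib

/-- A *labeled graph*: a finite simple graph whose vertices (a finite set of
natural numbers) carry a framing in `ZMod 2` and a sign (`true` = `+`, `false` = `-`). -/
structure LGraph where
  verts : Finset ℕ
  adj : ℕ → ℕ → Bool
  symm : ∀ x y, adj x y = adj y x
  loopless : ∀ x, adj x x = false
  adj_mem : ∀ x y, adj x y = true → x ∈ verts ∧ y ∈ verts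
  fr : ℕ → ZMod 2
  sgn : ℕ → Bool

namespace LGraph

/-- The adjacency matrix over `ZMod 2`, with framings on the diagonal. -/
def A (G : LGraph) : Matrix G.verts G.verts (ZMod 2) :=
  fun u v => if (u : ℕ) = (v : ℕ) then G.fr u else (if G.adj u v then 1 else 0)

/-- `corank (A(G) + E)` over `ZMod 2`. -/
noncomputable def corankAE (G : LGraph) : ℕ :=
  Fintype.card G.verts - (G.A + 1).rank

/-- `corank A(G)` over `ZMod 2`. -/
noncomputable def corankA (G : LGraph) : ℕ :=
  Fintype.card G.verts - G.A.rank

end LGraph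
namespace LGraph

/-- `G'` agrees with `G` (adjacency, framing and sign) away from the set `S`. -/
def sameOutside (G G' : LGraph) (S : Finset ℕ) : Prop :=
  (∀ x y, x ∉ S → y ∉ S → G'.adj x y = G.adj x y) ∧
  (∀ x, x ∉ S → G'.fr x = G.fr x ∧ G'.sgn x = G.sgn x)

/-- Ω1 (addition direction): `G'` is obtained from `G` by adding the isolated
vertex `v` with framing `0` and arbitrary sign. -/
def Omega1AddAt (G G' : LGraph) (v : ℕ) : Prop :=
  v ∉ G.verts ∧ G'.verts = insert v G.verts ∧ G'.fr v = 0 ∧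
    (∀ x, G'.adj v x = false) ∧ sameOutside G G' {v}

/-- Ω2 (addition direction): `G'` is obtained from `G` by adding two vertices `u, v`
with the same adjacencies with all other vertices, opposite signs, either
non-adjacent with framings `0` or adjacent with framings `1`. -/
def Omega2AddAt (G G' : LGraph) (u v : ℕ) : Prop :=
  u ≠ v ∧ u ∉ G.verts ∧ v ∉ G.verts ∧
    G'.verts = insert u (insert v G.verts) ∧
    G'.sgn u = !(G'.sgn v) ∧
    (∀ x, x ≠ u → x ≠ v → G'.adj u x = G'.adj v x) ∧
    ((G'.adj u v = false ∧ G'.fr u = 0 ∧ G'.fr v = 0) ∨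
     (G'.adj u v = true ∧ G'.fr u = 1 ∧ G'.fr v = 1)) ∧
    sameOutside G G' {u, v}

/-- Ω3 (forward direction) at vertices `u, v, w`, all labeled `(0,-)`, with `u`
adjacent exactly to `v` and `w`: the adjacency of `u` with every vertex lying in
exactly one of `N(v)`, `N(w)` is toggled and the signs of `v`,`w` become `+`. -/
def Omega3FwdAt (G G' : LGraph) (u v w : ℕ) : Prop :=
  u ≠ v ∧ u ≠ w ∧ v ≠ w ∧ u ∈ G.verts ∧ v ∈ G.verts ∧ w ∈ G.verts ∧
    G.fr u = 0 ∧ G.fr v = 0 ∧ G.fr w = 0 ∧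
    G.sgn u = false ∧ G.sgn v = false ∧ G.sgn w = false ∧
    (∀ x, G.adj u x = true ↔ (x = v ∨ x = w)) ∧
    G'.verts = G.verts ∧
    (∀ x, G'.adj u x = xor (xor (G.adj v x) (G.adj w x)) (G.adj u x)) ∧
    (∀ x y, x ≠ u → y ≠ u → G'.adj x y = G.adj x y) ∧
    G'.fr u = 0 ∧ G'.sgn u = false ∧
    G'.fr v = 0 ∧ G'.sgn v = true ∧ G'.fr w = 0 ∧ G'.sgn w = true ∧
    (∀ x, x ≠ u → x ≠ v → x ≠ w → (G'.fr x = G.fr x ∧ G'.sgn x = G.sgn x))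

/-- The (one-sided) pivot toggling condition at `u, v` for the pair `x, y`:
`x` is adjacent to `u`, `y` is adjacent to `v`, and `x` is not adjacent to `v`
or `y` is not adjacent to `u`. -/
def pivCond (G : LGraph) (u v x y : ℕ) : Prop :=
  G.adj u x = true ∧ G.adj v y = true ∧ (G.adj v x = false ∨ G.adj u y = false)

instance pivCond.instDecidable (G : LGraph) (u v x y : ℕ) :
    Decidable (pivCond G u v x y) := by
  unfold pivCond; infer_instance

/-- Ω4 at adjacent vertices `u, v` labeled `(0,α)`, `(0,β)`: `G'` is the pivot
`piv(G;u,v)` with the sign of `u` set to `-β` and the sign of `v` set to `-α`. -/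
def Omega4At (G G' : LGraph) (u v : ℕ) : Prop :=
  u ≠ v ∧ G.adj u v = true ∧ G.fr u = 0 ∧ G.fr v = 0 ∧
    G'.verts = G.verts ∧
    (∀ x y, G'.adj x y =
      (if x ≠ y ∧ x ∉ ({u, v} : Finset ℕ) ∧ y ∉ ({u, v} : Finset ℕ) ∧
          (pivCond G u v x y ∨ pivCond G u v y x)
       then !(G.adj x y) else G.adj x y)) ∧
    G'.fr u = 0 ∧ G'.fr v = 0 ∧
    G'.sgn u = !(G.sgn v) ∧ G'.sgn v = !(G.sgn u) ∧
    (∀ x, x ≠ u → x ≠ v → (G'.fr x = G.fr x ∧ G'.sgn x = G.sgn x))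

/-- Ω4' at a vertex `v` labeled `(1,α)`: `G'` is the local complement `LC(G;v)`
with the sign of `v` changed to `-α` and the framing of every neighbour of `v` toggled. -/
def Omega4pAt (G G' : LGraph) (v : ℕ) : Prop :=
  v ∈ G.verts ∧ G.fr v = 1 ∧
    G'.verts = G.verts ∧
    (∀ x y, G'.adj x y =
      (if x ≠ y ∧ G.adj v x = true ∧ G.adj v y = true
       then !(G.adj x y) else G.adj x y)) ∧
    G'.fr v = G.fr v ∧ G'.sgn v = !(G.sgn v) ∧
    (∀ x, x ≠ v → G'.sgn x = G.sgn x) ∧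
    (∀ x, x ≠ v → G'.fr x = (if G.adj v x then G.fr x + 1 else G.fr x))

/-- A single graph-move `Ω1`–`Ω4'` (in either direction). -/
inductive Move : LGraph → LGraph → Prop
  | o1a {G G' v} : Omega1AddAt G G' v → Move G G'
  | o1r {G G' v} : Omega1AddAt G' G v → Move G G'
  | o2a {G G' u v} : Omega2AddAt G G' u v → Move G G'
  | o2r {G G' u v} : Omega2AddAt G' G u v → Move G G'
  | o3f {G G' u v w} : Omega3FwdAt G G' u v w → Move G G'
  | o3b {G G' u v w} : Omega3FwdAt G' G u v w → Move G G'
  | o4 {G G' u v} : Omega4At G G' u v → Move G G'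
  | o4i {G G' u v} : Omega4At G' G u v → Move G G'
  | o4p {G G' v} : Omega4pAt G G' v → Move G G'
  | o4pi {G G' v} : Omega4pAt G' G v → Move G G'

end LGraph
namespace LGraph

/-- The induced labeled subgraph of `G` on a set `s` of vertices. -/
def induce (G : LGraph) (s : Finset ℕ) : LGraph where
  verts := s ∩ G.verts
  adj := fun x y => decide (x ∈ s) && decide (y ∈ s) && G.adj x y
  symm := by
    intro x y
    cases h1 : decide (x ∈ s) <;> cases h2 : decide (y ∈ s) <;>
      simp [h1, h2, G.symm x y]
  loopless := by intro x; simp [G.loopless x]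
  adj_mem := by
    intro x y h
    simp only [Bool.and_eq_true, decide_eq_true_eq] at h
    exact ⟨Finset.mem_inter.2 ⟨h.1.1, (G.adj_mem x y h.2).1⟩,
           Finset.mem_inter.2 ⟨h.1.2, (G.adj_mem x y h.2).2⟩⟩
  fr := G.fr
  sgn := G.sgn

/-- `α(s)`: the number of vertices in `s` with sign `-` plus the number of
vertices in `V(G) \ s` with sign `+`. -/
def alphaS (G : LGraph) (s : Finset ℕ) : ℕ :=
  (s.filter (fun v => G.sgn v = false)).card +
  ((G.verts \ s).filter (fun v => G.sgn v = true)).card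

/-- `β(s) = |V(G)| - α(s)`. -/
def betaS (G : LGraph) (s : Finset ℕ) : ℕ := G.verts.card - G.alphaS s

/-- The Kauffman bracket polynomial
`⟨G⟩ = Σ_s a^(α(s)-β(s)) (-a²-a⁻²)^(corank A(G(s)))` of a labeled graph, as a
Laurent polynomial in `a` over `ℤ`. -/
noncomputable def bracket (G : LGraph) : LaurentPolynomial ℤ :=
  ∑ s ∈ G.verts.powerset,
    LaurentPolynomial.T ((G.alphaS s : ℤ) - (G.betaS s : ℤ)) *
      (-(LaurentPolynomial.T 2) - LaurentPolynomial.T (-2)) ^ ((G.induce s).corankA)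

end LGraph

/-!
Split the states of `G'` according to their trace `s` on `V(G)`. The state `s` contributes as
in `G`. Since `adj(u,v) = fr(u) = fr(v)`, the rows of `u` and `v` in the adjacency matrix of `G'`
coincide: the states `s + u` and `s + v` have equivalent matrices, and the matrix of `s + u + v`
has a repeated row and column, so its corank is one larger. With opposite signs at `u` and `v`
the exponents of these three states are `e ± 2`, `e ∓ 2` and `e`, so with `δ = -a² - a⁻²` and
`k` the corank of `s + u` they contribute `a^e δ^k (a² + a⁻² + δ) = 0`.
-/

namespace Matrix

theorem rank_submatrix_of_surjective {m n m₀ n₀ R : Type*} [Fintype n] [Fintype n₀]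
    [CommSemiring R] [StrongRankCondition R] (A : Matrix m n R) {r : m₀ → m} {c : n₀ → n}
    (hr : Function.Surjective r) (hc : Function.Surjective c) :
    (A.submatrix r c).rank = A.rank := by
  refine le_antisymm (rank_submatrix_le A r c) ?_
  calc A.rank
      = ((A.submatrix r c).submatrix (Function.surjInv hr) (Function.surjInv hc)).rank := by simp
    _ ≤ (A.submatrix r c).rank := rank_submatrix_le _ _ _

end Matrix

namespace LGraph

variable {G : LGraph} {s t : Finset ℕ}

/-- The entries of `G.A`, as a function on all pairs of natural numbers. -/
def entry (G : LGraph) (x y : ℕ) : ZMod 2 :=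
  if x = y then G.fr x else if G.adj x y then 1 else 0

theorem entry_comm (G : LGraph) (x y : ℕ) : G.entry x y = G.entry y x := by
  unfold entry
  split_ifs <;> simp_all [G.symm x y]

theorem induce_verts_of_subset (h : s ⊆ G.verts) : (G.induce s).verts = s :=
  Finset.inter_eq_left.mpr h

theorem mem_of_mem_induce_verts {x : ℕ} (hx : x ∈ (G.induce s).verts) : x ∈ s :=
  (Finset.mem_inter.1 hx).1

theorem A_induce_apply (x y : (G.induce s).verts) : (G.induce s).A x y = G.entry x y := by
  simp [A, entry, induce, mem_of_mem_induce_verts x.2, mem_of_mem_induce_verts y.2]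

theorem corankA_induce_image {G₁ G₂ : LGraph} (ht : t ⊆ G₁.verts) (φ : ℕ → ℕ)
    (hφt : t.image φ ⊆ G₂.verts)
    (hentry : ∀ x ∈ t, ∀ y ∈ t, G₁.entry x y = G₂.entry (φ x) (φ y)) :
    (G₁.induce t).corankA = (G₂.induce (t.image φ)).corankA + (t.card - (t.image φ).card) := by
  let f : (G₁.induce t).verts → (G₂.induce (t.image φ)).verts := fun x =>
    ⟨φ x, by
      rw [induce_verts_of_subset hφt]
      exact Finset.mem_image_of_mem φ (mem_of_mem_induce_verts x.2)⟩
  have hf : Function.Surjective f := by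
    rintro ⟨y, hy⟩
    obtain ⟨x, hx, rfl⟩ := Finset.mem_image.1 (mem_of_mem_induce_verts hy)
    exact ⟨⟨x, by rwa [induce_verts_of_subset ht]⟩, rfl⟩
  have hA : (G₁.induce t).A = (G₂.induce (t.image φ)).A.submatrix f f := by
    ext x y
    simp only [Matrix.submatrix_apply, A_induce_apply]
    exact hentry _ (mem_of_mem_induce_verts x.2) _ (mem_of_mem_induce_verts y.2)
  have hcard := Fintype.card_le_of_surjective f hf
  have hrank := Matrix.rank_le_card_width (G₂.induce (t.image φ)).A
  rw [corankA, corankA, hA, Matrix.rank_submatrix_of_surjective _ hf hf]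
  simp only [Fintype.card_coe, induce_verts_of_subset ht, induce_verts_of_subset hφt] at *
  omega

def sgnZ (G : LGraph) (x : ℕ) : ℤ := if G.sgn x then 1 else -1

theorem sgnZ_eq_one_or_neg_one (G : LGraph) (x : ℕ) : G.sgnZ x = 1 ∨ G.sgnZ x = -1 := by
  unfold sgnZ
  split_ifs <;> simp

theorem sum_sgnZ (G : LGraph) (t : Finset ℕ) : ∑ x ∈ t, G.sgnZ x =
    (t.filter (fun x => G.sgn x = true)).card - (t.filter (fun x => G.sgn x = false)).card := by
  simp [sgnZ, Finset.sum_ite, sub_eq_add_neg]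

theorem alphaS_sub_betaS (hs : s ⊆ G.verts) :
    (G.alphaS s : ℤ) - G.betaS s = ∑ x ∈ G.verts, if x ∈ s then -G.sgnZ x else G.sgnZ x := by
  have hsplit (t : Finset ℕ) :=
    Finset.card_filter_add_card_filter_not (s := t) (fun x => G.sgn x = true)
  simp only [Bool.not_eq_true] at hsplit
  have := hsplit s
  have := hsplit (G.verts \ s)
  have := Finset.card_sdiff_add_card_eq_card hs
  rw [Finset.sum_ite, Finset.filter_mem_eq_inter, Finset.inter_eq_right.2 hs,
    Finset.filter_notMem_eq_sdiff, Finset.sum_neg_distrib, sum_sgnZ, sum_sgnZ, betaS, alphaS]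
  push_cast
  omega

noncomputable def stateTerm (G : LGraph) (s : Finset ℕ) : LaurentPolynomial ℤ :=
  LaurentPolynomial.T ((G.alphaS s : ℤ) - (G.betaS s : ℤ)) *
    (-(LaurentPolynomial.T 2) - LaurentPolynomial.T (-2)) ^ ((G.induce s).corankA)

theorem bracket_eq_sum_stateTerm (G : LGraph) :
    G.bracket = ∑ s ∈ G.verts.powerset, G.stateTerm s := rfl

namespace Omega2AddAt

variable {G' : LGraph} {u v : ℕ}

theorem verts_eq (h : Omega2AddAt G G' u v) : G'.verts = insert u (insert v G.verts) :=
  h.2.2.2.1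

theorem left_notMem_insert (h : Omega2AddAt G G' u v) : u ∉ insert v G.verts := by
  simp [h.1, h.2.1]

theorem right_notMem (h : Omega2AddAt G G' u v) : v ∉ G.verts :=
  h.2.2.1

theorem ne_of_mem (h : Omega2AddAt G G' u v) {x : ℕ} (hx : x ∈ G.verts) : x ≠ u ∧ x ≠ v :=
  ⟨fun hxu => h.2.1 (hxu ▸ hx), fun hxv => h.right_notMem (hxv ▸ hx)⟩

theorem notMem_of_subset (h : Omega2AddAt G G' u v) (hs : s ⊆ G.verts) : u ∉ s ∧ v ∉ s :=
  ⟨fun hu => (h.ne_of_mem (hs hu)).1 rfl, fun hv => (h.ne_of_mem (hs hv)).2 rfl⟩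

theorem insert_insert_subset (h : Omega2AddAt G G' u v) (hs : s ⊆ G.verts) :
    insert u (insert v s) ⊆ G'.verts := by
  rw [h.verts_eq]
  exact Finset.insert_subset_insert _ (Finset.insert_subset_insert _ hs)

theorem agree_of_mem (h : Omega2AddAt G G' u v) {x : ℕ} (hx : x ∈ G.verts) :
    (∀ y ∈ G.verts, G'.adj x y = G.adj x y) ∧ G'.fr x = G.fr x ∧ G'.sgn x = G.sgn x := by
  have hpair {y : ℕ} (hy : y ∈ G.verts) : y ∉ ({u, v} : Finset ℕ) := by
    simpa using h.ne_of_mem hy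
  obtain ⟨-, -, -, -, -, -, -, hadj, hlabel⟩ := h
  exact ⟨fun y hy => hadj x y (hpair hx) (hpair hy), hlabel x (hpair hx)⟩

theorem entry_eq (h : Omega2AddAt G G' u v) {x y : ℕ} (hx : x ∈ G.verts) (hy : y ∈ G.verts) :
    G'.entry x y = G.entry x y := by
  simp only [entry, (h.agree_of_mem hx).1 y hy, (h.agree_of_mem hx).2.1]

theorem sgnZ_eq (h : Omega2AddAt G G' u v) {x : ℕ} (hx : x ∈ G.verts) :
    G'.sgnZ x = G.sgnZ x := by
  simp only [sgnZ, (h.agree_of_mem hx).2.2]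

theorem sgnZ_left_eq_neg (h : Omega2AddAt G G' u v) : G'.sgnZ u = -G'.sgnZ v := by
  obtain ⟨-, -, -, -, hsgn, -⟩ := h
  cases hv : G'.sgn v <;> simp [sgnZ, hsgn, hv]

theorem entry_twin (h : Omega2AddAt G G' u v) (y : ℕ) : G'.entry v y = G'.entry u y := by
  obtain ⟨huv, -, -, -, -, htwin, hlabel, -⟩ := h
  have hdiag : (if G'.adj u v then 1 else 0 : ZMod 2) = G'.fr u ∧ G'.fr v = G'.fr u := by
    rcases hlabel with ⟨h1, h2, h3⟩ | ⟨h1, h2, h3⟩ <;> simp [h1, h2, h3]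
  unfold entry
  by_cases hyv : y = v
  · subst hyv; simp [huv, hdiag.2, hdiag.1]
  by_cases hyu : y = u
  · subst hyu; simp [Ne.symm huv, G'.symm v y, hdiag.1]
  · simp [Ne.symm hyv, Ne.symm hyu, htwin y hyu hyv]

theorem entry_merge (h : Omega2AddAt G G' u v) (x y : ℕ) :
    G'.entry x y = G'.entry (Function.update id v u x) (Function.update id v u y) := by
  have hrow (x y : ℕ) : G'.entry x y = G'.entry (Function.update id v u x) y := by
    by_cases hx : x = v
    · subst hx; simp [h.entry_twin]
    · simp [hx]
  rw [hrow, entry_comm, hrow, entry_comm]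

theorem image_merge (h : Omega2AddAt G G' u v) (hs : s ⊆ G.verts) :
    (insert v s).image (Function.update id v u) = insert u s ∧
      (insert u (insert v s)).image (Function.update id v u) = insert u s := by
  have hsfix : s.image (Function.update id v u) = s := by
    refine (Finset.image_congr fun x hx => ?_).trans s.image_id
    simp [(h.ne_of_mem (hs hx)).2]
  simp [Finset.image_insert, hsfix, h.1]

theorem corankA_induce (h : Omega2AddAt G G' u v) (hs : s ⊆ G.verts) :
    (G'.induce s).corankA = (G.induce s).corankA := by
  have hs' : s ⊆ G'.verts :=
    ((Finset.subset_insert _ _).trans (Finset.subset_insert _ _)).trans (h.insert_insert_subset hs)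
  simpa using corankA_induce_image hs' id (by simpa using hs)
    (fun x hx y hy => h.entry_eq (hs hx) (hs hy))

theorem corankA_induce_merge (h : Omega2AddAt G G' u v) (ht : t ⊆ G'.verts) :
    (G'.induce t).corankA = (G'.induce (t.image (Function.update id v u))).corankA +
      (t.card - (t.image (Function.update id v u)).card) := by
  have hu : u ∈ G'.verts := by simp [h.verts_eq]
  refine corankA_induce_image ht _ (fun y hy => ?_) (fun x _ y _ => h.entry_merge x y)
  obtain ⟨x, hx, rfl⟩ := Finset.mem_image.1 hy
  by_cases hxv : x = v
  · simpa [hxv] using hu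
  · simpa [hxv] using ht hx

theorem corankA_induce_insert_right (h : Omega2AddAt G G' u v) (hs : s ⊆ G.verts) :
    (G'.induce (insert v s)).corankA = (G'.induce (insert u s)).corankA := by
  obtain ⟨hus, hvs⟩ := h.notMem_of_subset hs
  have key := h.corankA_induce_merge ((Finset.subset_insert _ _).trans (h.insert_insert_subset hs))
  rwa [(h.image_merge hs).1, Finset.card_insert_of_notMem hvs, Finset.card_insert_of_notMem hus,
    Nat.sub_self, add_zero] at key

theorem corankA_induce_insert_insert (h : Omega2AddAt G G' u v) (hs : s ⊆ G.verts) :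
    (G'.induce (insert u (insert v s))).corankA = (G'.induce (insert u s)).corankA + 1 := by
  obtain ⟨hus, hvs⟩ := h.notMem_of_subset hs
  have key := h.corankA_induce_merge (h.insert_insert_subset hs)
  rw [(h.image_merge hs).2, Finset.card_insert_of_notMem (by simp [h.1, hus]),
    Finset.card_insert_of_notMem hvs, Finset.card_insert_of_notMem hus] at key
  omega

theorem alphaS_sub_betaS_eq (h : Omega2AddAt G G' u v) (hs : s ⊆ G.verts)
    (ht : t ⊆ G'.verts) (hts : ∀ x ∈ G.verts, x ∈ t ↔ x ∈ s) :
    (G'.alphaS t : ℤ) - G'.betaS t = (G.alphaS s : ℤ) - G.betaS s +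
      ((if u ∈ t then -G'.sgnZ u else G'.sgnZ u) + (if v ∈ t then -G'.sgnZ v else G'.sgnZ v)) := by
  have hsum : ∑ x ∈ G.verts, (if x ∈ t then -G'.sgnZ x else G'.sgnZ x) =
      ∑ x ∈ G.verts, (if x ∈ s then -G.sgnZ x else G.sgnZ x) :=
    Finset.sum_congr rfl fun x hx => by simp [hts x hx, h.sgnZ_eq hx]
  rw [alphaS_sub_betaS ht, alphaS_sub_betaS hs, h.verts_eq, Finset.sum_insert h.left_notMem_insert,
    Finset.sum_insert h.right_notMem, hsum]
  ring

theorem stateTerm_sum (h : Omega2AddAt G G' u v) (hs : s ⊆ G.verts) :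
    G'.stateTerm s + G'.stateTerm (insert v s) +
      (G'.stateTerm (insert u s) + G'.stateTerm (insert u (insert v s))) = G.stateTerm s := by
  obtain ⟨hus, hvs⟩ := h.notMem_of_subset hs
  have hexp (t) (ht : t ⊆ insert u (insert v s)) (hts : ∀ x ∈ G.verts, x ∈ t ↔ x ∈ s) :=
    h.alphaS_sub_betaS_eq hs (ht.trans (h.insert_insert_subset hs)) hts
  have hne (x) (hx : x ∈ G.verts) := h.ne_of_mem hx
  simp only [stateTerm, hexp s (by grind) (by grind), hexp (insert v s) (by grind) (by grind),
    hexp (insert u s) (by grind) (by grind), hexp _ subset_rfl (by grind),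
    h.corankA_induce hs, h.corankA_induce_insert_right hs, h.corankA_induce_insert_insert hs,
    Finset.mem_insert, h.1, Ne.symm h.1, hus, hvs, or_self, or_false, or_true, if_true, if_false,
    h.sgnZ_left_eq_neg]
  rcases G'.sgnZ_eq_one_or_neg_one v with hk | hk <;> norm_num only [hk] <;>
    simp only [add_zero, LaurentPolynomial.T_add] <;> ring

end Omega2AddAt

end LGraph

/-- The Kauffman bracket is invariant under the second
graph-move `Ω2` (addition of two vertices with the same adjacencies with all
other vertices, opposite signs, non-adjacent with framings `0` or adjacent
with framings `1`). -/
theorem bracket_omega2 (G G' : LGraph) (u v : ℕ)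
    (h : LGraph.Omega2AddAt G G' u v) :
    G'.bracket = G.bracket := by
  rw [LGraph.bracket_eq_sum_stateTerm, LGraph.bracket_eq_sum_stateTerm, h.verts_eq,
    Finset.sum_powerset_insert h.left_notMem_insert, Finset.sum_powerset_insert h.right_notMem,
    Finset.sum_powerset_insert h.right_notMem, ← Finset.sum_add_distrib, ← Finset.sum_add_distrib,
    ← Finset.sum_add_distrib]
  exact Finset.sum_congr rfl fun s hs => h.stateTerm_sum (Finset.mem_powerset.1 hs)
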